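/- Let (α_1, …, α_k) be a tuple of nonzero algebraic numbers satisfying Properties (P1) and (P2). Then for all 1 ≤ i, j ≤ k, if β is a Galois conjugate of α_i over ℚ, γ is a Galois conjugate of α_j over ℚ, and β/γ is a root of unity, then β = γ. -/

import Mathlib

open scoped BigOperators

noncomputable section

/-- The distance from a complex number to the nearest integer,
`‖x‖_ℤ = min {|x - m| : m ∈ ℤ}`. -/
noncomputable def distInt (x : ℂ) : ℝ := ⨅ m : ℤ, ‖x - m‖

/-- `x` is a root of unity. -/
def IsRootOfUnity {F : Type*} [Monoid F] (x : F) : Prop := ∃ n : ℕ, 0 < n ∧ x ^ n = 1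

/-- A sublinear function: a positive function `f : ℕ → ℝ` with `f n / n → 0`. -/
def Sublinear (f : ℕ → ℝ) : Prop :=
  (∀ n, 0 < f n) ∧ Filter.Tendsto (fun n => f n / (n : ℝ)) Filter.atTop (nhds 0)

/-- The absolute multiplicative Weil height of an algebraic number `x`:
`H(x)^d = c · ∏ max (1, |xᵢ|)` where `d` is the degree of the minimal polynomial of `x`
over `ℚ`, the `xᵢ` are its complex roots, and `c` is the smallest positive integer
clearing all denominators of its coefficients (the leading coefficient of the primitive
integral minimal polynomial). -/
noncomputable def mulHeight (x : AlgebraicClosure ℚ) : ℝ :=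
  (((sInf {c : ℕ | 0 < c ∧ ∀ i, ((c : ℚ) * (minpoly ℚ x).coeff i).den = 1} : ℕ) : ℝ) *
      (((minpoly ℚ x).map (algebraMap ℚ ℂ)).roots.map (fun z => max 1 ‖z‖)).prod) ^
    (((minpoly ℚ x).natDegree : ℝ)⁻¹)

/-- The absolute logarithmic Weil height. -/
noncomputable def logHeight (x : AlgebraicClosure ℚ) : ℝ := Real.log (mulHeight x)

/-- `y` is a Galois conjugate of `x` over `ℚ`. -/
def IsConjugate (x y : AlgebraicClosure ℚ) : Prop :=
  ∃ σ : AlgebraicClosure ℚ ≃ₐ[ℚ] AlgebraicClosure ℚ, σ x = y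

/-- A tuple `(β 0, …, β (k-1))` of (distinct, nonzero) algebraic numbers is pseudo-Pisot,
with respect to a fixed embedding `ι` of `ℚ̄` into `ℂ`, if letting `B` be the (finite) set of
Galois conjugates of the `β i` not belonging to `{β 0, …, β (k-1)}`, the sum of the `β i` and
of all elements of `B` is a rational integer and every element of `B` has modulus `< 1`. -/
def IsPseudoPisot (ι : AlgebraicClosure ℚ →+* ℂ) {k : ℕ} (β : Fin k → AlgebraicClosure ℚ) :
    Prop :=
  ∃ B : Finset (AlgebraicClosure ℚ),
    (↑B = {γ | γ ∉ Set.range β ∧ ∃ i, IsConjugate (β i) γ}) ∧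
    (∃ m : ℤ, (∑ i, β i) + (∑ γ ∈ B, γ) = (m : AlgebraicClosure ℚ)) ∧
    ∀ γ ∈ B, ‖ι γ‖ < 1

/-- A Pisot number: a real algebraic integer `> 1` all of whose other conjugates over `ℚ`
have modulus `< 1`. -/
def IsPisotNumber (x : ℝ) : Prop :=
  1 < x ∧ IsIntegral ℤ x ∧
    ∀ z : ℂ, ((minpoly ℚ x).map (algebraMap ℚ ℂ)).IsRoot z → z ≠ (x : ℂ) → ‖z‖ < 1

open NumberField IsDedekindDomain in
/-- The set of places of a number field `K`: infinite places together with the finite places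
(nonzero prime ideals of the ring of integers). -/
def Place (K : Type*) [Field K] [NumberField K] : Type _ :=
  InfinitePlace K ⊕ HeightOneSpectrum (𝓞 K)

open NumberField IsDedekindDomain in
open scoped Classical in
/-- The (unnormalized) `v`-adic absolute value `|x|_v = N(v)^{-ord_v x}`. -/
noncomputable def finPlaceAbs {K : Type*} [Field K] [NumberField K]
    (v : HeightOneSpectrum (𝓞 K)) (x : K) : ℝ :=
  if hx : x = 0 then 0
  else (Ideal.absNorm v.asIdeal : ℝ) ^
    (Multiplicative.toAdd (WithZero.unzero ((Valuation.ne_zero_iff (v.valuation K)).mpr hx)))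

open NumberField in
/-- The normalized absolute value `|·|_w` attached to a place `w` of `K`, normalized so that
`|x|_w = |Norm_{K_w/ℚ_v}(x)|_v^{1/[K:ℚ]}` and the product formula holds. -/
noncomputable def placeAbs {K : Type*} [Field K] [NumberField K] : Place K → K → ℝ
  | Sum.inl w => fun x => (w x) ^ ((w.mult : ℝ) / (Module.finrank ℚ K : ℝ))
  | Sum.inr v => fun x => (finPlaceAbs v x) ^ ((Module.finrank ℚ K : ℝ)⁻¹)

/-- The multiplicative projective height `H([x 0 : ⋯ : x m]) = ∏_w max_i |x i|_w`. -/
noncomputable def projHeight {K : Type*} [Field K] [NumberField K] {m : ℕ}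
    (x : Fin m → K) : ℝ :=
  ∏ᶠ w : Place K, ⨆ i, placeAbs w (x i)

/-- The multiplicative height of an element of a number field, `H(α) = H([α : 1])`. -/
noncomputable def mulHeightIn {K : Type*} [Field K] [NumberField K] (x : K) : ℝ :=
  projHeight ![x, 1]

/-- An `S`-unit: an element of `K^*` whose normalized absolute value is `1` at every place
outside `S`. -/
def IsSUnit {K : Type*} [Field K] [NumberField K] (S : Finset (Place K)) (x : K) : Prop :=
  x ≠ 0 ∧ ∀ p : Place K, p ∉ S → placeAbs p x = 1

/-- The image `σ(R)` of a rational function `R ∈ ℚ̄(x)` under `σ ∈ G_ℚ`, obtained by applying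
`σ` to the coefficients of the numerator and of the denominator of `R`. -/
noncomputable def ratFuncGal (σ : AlgebraicClosure ℚ ≃ₐ[ℚ] AlgebraicClosure ℚ)
    (R : RatFunc (AlgebraicClosure ℚ)) : RatFunc (AlgebraicClosure ℚ) :=
  algebraMap (Polynomial (AlgebraicClosure ℚ)) (RatFunc (AlgebraicClosure ℚ))
      (R.num.map (σ : AlgebraicClosure ℚ →+* AlgebraicClosure ℚ)) /
    algebraMap (Polynomial (AlgebraicClosure ℚ)) (RatFunc (AlgebraicClosure ℚ))
      (R.denom.map (σ : AlgebraicClosure ℚ →+* AlgebraicClosure ℚ))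

end

/-!
If `β = σ αᵢ` and `γ = τ αⱼ` with `β / γ` a root of unity, then so is `αᵢ / σ⁻¹τ αⱼ`, hence (P2)
makes `αⱼ` a conjugate of `αᵢ`: `β` and `γ` are conjugates of `αᵢ` with `βⁿ = γⁿ`. By (P1) the
fields `ℚ(β)` and `ℚ(βⁿ)` have the same degree, so they coincide; the automorphism carrying
`β` to `γ` fixes `βⁿ`, hence all of `ℚ(β)`, and therefore `β = γ`.
-/

open IntermediateField

theorem AlgEquiv.apply_eq_self_of_mem_adjoin_simple {K L : Type*} [Field K] [Field L]
    [Algebra K L] (ρ : L ≃ₐ[K] L) {x y : L} (hy : ρ y = y) (hx : x ∈ K⟮y⟯) : ρ x = x := by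
  have hle : K⟮y⟯ ≤ fixedField (Subgroup.zpowers ρ) := by
    rw [adjoin_simple_le_iff, mem_fixedField_iff, Subgroup.forall_mem_zpowers]
    exact (MulAction.mem_fixedBy_zpowers_iff_mem_fixedBy (g := ρ)).mpr hy
  exact (mem_fixedField_iff _ _).mp (hle hx) ρ (Subgroup.mem_zpowers ρ)

theorem IntermediateField.adjoin_simple_pow_eq_of_natDegree_minpoly_eq {K L : Type*} [Field K]
    [Field L] [Algebra K L] {x : L} (hx : IsIntegral K x) (n : ℕ)
    (h : (minpoly K x).natDegree = (minpoly K (x ^ n)).natDegree) : K⟮x ^ n⟯ = K⟮x⟯ := by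
  have : FiniteDimensional K K⟮x⟯ := adjoin.finiteDimensional hx
  refine eq_of_le_of_finrank_eq
    (adjoin_simple_le_iff.mpr (pow_mem (mem_adjoin_simple_self K x) n)) ?_
  rw [adjoin.finrank hx, adjoin.finrank (hx.pow n), h]

theorem AlgEquiv.apply_eq_apply_of_apply_pow_eq {K L : Type*} [Field K] [Field L] [Algebra K L]
    (σ τ : L ≃ₐ[K] L) {a : L} (ha : IsIntegral K a) {n : ℕ}
    (hdeg : (minpoly K a).natDegree = (minpoly K (a ^ n)).natDegree)
    (h : σ a ^ n = τ a ^ n) : σ a = τ a := by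
  have hdeg' : (minpoly K (σ a)).natDegree = (minpoly K (σ a ^ n)).natDegree := by
    rwa [← map_pow, minpoly.algEquiv_eq, minpoly.algEquiv_eq]
  have hmem : σ a ∈ K⟮σ a ^ n⟯ := by
    rw [adjoin_simple_pow_eq_of_natDegree_minpoly_eq (ha.map σ) n hdeg']
    exact mem_adjoin_simple_self K _
  have hfix : (σ.symm.trans τ) (σ a ^ n) = σ a ^ n := by
    rw [AlgEquiv.trans_apply, map_pow, AlgEquiv.symm_apply_apply, h, map_pow]
  simpa using ((σ.symm.trans τ).apply_eq_self_of_mem_adjoin_simple hfix hmem).symm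

theorem IsRootOfUnity.map {F G M : Type*} [Monoid F] [Monoid G] [FunLike M F G]
    [MonoidHomClass M F G] (f : M) {x : F} (hx : IsRootOfUnity x) : IsRootOfUnity (f x) := by
  obtain ⟨n, hn, hxn⟩ := hx
  exact ⟨n, hn, by rw [← map_pow, hxn, map_one]⟩

theorem IsRootOfUnity.exists_pow_eq_pow {G₀ : Type*} [CommGroupWithZero G₀] {x y : G₀}
    (h : IsRootOfUnity (x / y)) : ∃ n, 0 < n ∧ x ^ n = y ^ n := by
  obtain ⟨n, hn, hxy⟩ := h
  have hy : y ≠ 0 := by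
    rintro rfl
    simp [zero_pow hn.ne'] at hxy
  exact ⟨n, hn, by rwa [div_pow, div_eq_one_iff_eq (pow_ne_zero n hy)] at hxy⟩

theorem stmt16_general
    (k : ℕ) (α : Fin k → AlgebraicClosure ℚ)
    (hP1 : ∀ m : ℕ, 0 < m → ∀ i,
        (minpoly ℚ (α i)).natDegree = (minpoly ℚ (α i ^ m)).natDegree)
    (hP2 : ∀ i j : Fin k,
        (∃ σ : AlgebraicClosure ℚ ≃ₐ[ℚ] AlgebraicClosure ℚ, IsRootOfUnity (α i / σ (α j))) →
        IsConjugate (α i) (α j)) :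
    ∀ (i j : Fin k) (β γ : AlgebraicClosure ℚ),
      IsConjugate (α i) β → IsConjugate (α j) γ → IsRootOfUnity (β / γ) → β = γ := by
  rintro i j _ _ ⟨σ, rfl⟩ ⟨τ, rfl⟩ hζ
  obtain ⟨n, hn, hpow⟩ := hζ.exists_pow_eq_pow
  obtain ⟨ρ, hρ⟩ : IsConjugate (α i) (α j) := by
    refine hP2 i j ⟨τ.trans σ.symm, ?_⟩
    simpa [map_div₀] using hζ.map σ.symm
  rw [← hρ] at hpow ⊢
  exact σ.apply_eq_apply_of_apply_pow_eq (ρ.trans τ)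
    ((AlgebraicClosure.isAlgebraic ℚ).isAlgebraic _).isIntegral (hP1 n hn i) hpow

/-- **Lemma.** If `(α₁, …, α_k)` satisfies (P1) and (P2), then whenever `β` is a conjugate of
`αᵢ`, `γ` is a conjugate of `α_j`, and `β/γ` is a root of unity, one has `β = γ`. -/
theorem stmt16
    (k : ℕ) (α : Fin k → AlgebraicClosure ℚ) (hα0 : ∀ i, α i ≠ 0)
    (hP1 : ∀ m : ℕ, 0 < m → ∀ i,
        (minpoly ℚ (α i)).natDegree = (minpoly ℚ (α i ^ m)).natDegree)
    (hP2 : ∀ i j : Fin k,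
        (∃ σ : AlgebraicClosure ℚ ≃ₐ[ℚ] AlgebraicClosure ℚ, IsRootOfUnity (α i / σ (α j))) →
        IsConjugate (α i) (α j)) :
    ∀ (i j : Fin k) (β γ : AlgebraicClosure ℚ),
      IsConjugate (α i) β → IsConjugate (α j) γ → IsRootOfUnity (β / γ) → β = γ :=
  stmt16_general k α hP1 hP2
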